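/- arXiv:2204.00947 — 4 statements merged into one kernel-verified Lean document; each statement's English description precedes it below -/
import Mathlib

section
/- The map β satisfies the Yang–Baxter (braid) relation on V ⊗ V ⊗ V: (β ⊗ id_V) ∘ (id_V ⊗ β) ∘ (β ⊗ id_V) = (id_V ⊗ β) ∘ (β ⊗ id_V) ∘ (id_V ⊗ β). (This is the Reidemeister III relation for the gl_n crossings on the vector representation.) -/
set_option maxHeartbeats 1000000
set_option synthInstance.maxHeartbeats 400000


open scoped TensorProduct

/-- The standard basis vector `e i` of `Fin n → K`. -/
noncomputable def stdB (K : Type*) [Field K] {n : ℕ} (i : Fin n) : Fin n → K :=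
  Pi.single i 1

/-- The gl_n R-matrix `β` satisfies the Yang–Baxter (braid) relation on `V ⊗ V ⊗ V`
(Reidemeister III). -/
theorem stmt6 {K : Type*} [Field K] (q : K) (hq : q ≠ 0) (n : ℕ) (hn : 1 ≤ n)
    (β : ((Fin n → K) ⊗[K] (Fin n → K)) →ₗ[K] ((Fin n → K) ⊗[K] (Fin n → K)))
    (hβ : ∀ i j : Fin n,
      β (stdB K i ⊗ₜ[K] stdB K j) =
        if i = j then q • (stdB K i ⊗ₜ[K] stdB K i)
        else if i < j then stdB K j ⊗ₜ[K] stdB K i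
        else stdB K j ⊗ₜ[K] stdB K i + (q - q⁻¹) • (stdB K i ⊗ₜ[K] stdB K j))
    (b₁ b₂ : ((Fin n → K) ⊗[K] ((Fin n → K) ⊗[K] (Fin n → K))) →ₗ[K]
      ((Fin n → K) ⊗[K] ((Fin n → K) ⊗[K] (Fin n → K))))
    -- `b₁ = β ⊗ id_V`, transported along the associator
    (hb₁ : b₁ = (TensorProduct.assoc K (Fin n → K) (Fin n → K) (Fin n → K)).toLinearMap ∘ₗ
      TensorProduct.map β (LinearMap.id : (Fin n → K) →ₗ[K] (Fin n → K)) ∘ₗ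
      (TensorProduct.assoc K (Fin n → K) (Fin n → K) (Fin n → K)).symm.toLinearMap)
    -- `b₂ = id_V ⊗ β`
    (hb₂ : b₂ = TensorProduct.map (LinearMap.id : (Fin n → K) →ₗ[K] (Fin n → K)) β) :
    b₁ ∘ₗ b₂ ∘ₗ b₁ = b₂ ∘ₗ b₁ ∘ₗ b₂ := by
  have hq' : q * q⁻¹ = 1 := mul_inv_cancel₀ hq
  subst hb₁ hb₂
  apply ((Pi.basisFun K (Fin n)).tensorProduct
    ((Pi.basisFun K (Fin n)).tensorProduct (Pi.basisFun K (Fin n)))).ext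
  rintro ⟨i, j, k⟩
  have hsb : ∀ m : Fin n, Pi.basisFun K (Fin n) m = stdB K m := by
    intro m; simp [stdB]
  simp only [Module.Basis.tensorProduct_apply, hsb, LinearMap.comp_apply, LinearEquiv.coe_coe,
    TensorProduct.assoc_symm_tmul, TensorProduct.map_tmul, LinearMap.id_apply]
  rcases lt_trichotomy i j with hij | rfl | hij
  · rcases lt_trichotomy j k with hjk | rfl | hjk
    · -- i < j < k
      simp only [hβ, hij, hjk, hij.trans hjk, hij.ne, hjk.ne, (hij.trans hjk).ne, hij.ne', hjk.ne', (hij.trans hjk).ne', hij.not_gt, hjk.not_gt, (hij.trans hjk).not_gt, if_true, if_false, ite_true, ite_false,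
      eq_self_iff_true, map_add, map_smul, smul_add, smul_smul,
      TensorProduct.add_tmul, TensorProduct.tmul_add, TensorProduct.smul_tmul,
      TensorProduct.tmul_smul, TensorProduct.assoc_tmul, TensorProduct.assoc_symm_tmul,
      TensorProduct.map_tmul, LinearMap.id_apply, LinearEquiv.coe_coe, LinearMap.comp_apply]
      try (match_scalars <;> (field_simp; try ring))
    · -- i < j = k
      simp only [hβ, hij, hij.ne, hij.ne', hij.not_gt, if_true, if_false, ite_true, ite_false,
      eq_self_iff_true, map_add, map_smul, smul_add, smul_smul,
      TensorProduct.add_tmul, TensorProduct.tmul_add, TensorProduct.smul_tmul,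
      TensorProduct.tmul_smul, TensorProduct.assoc_tmul, TensorProduct.assoc_symm_tmul,
      TensorProduct.map_tmul, LinearMap.id_apply, LinearEquiv.coe_coe, LinearMap.comp_apply]
      try (match_scalars <;> (field_simp; try ring))
    · rcases lt_trichotomy i k with hik | rfl | hik
      · -- i < k < j
        simp only [hβ, hij, hik, hjk, hij.ne, hij.ne', hik.ne, hik.ne', hjk.ne, hjk.ne', hij.not_gt, hik.not_gt, hjk.not_gt, if_true, if_false, ite_true, ite_false,
        eq_self_iff_true, map_add, map_smul, smul_add, smul_smul,
        TensorProduct.add_tmul, TensorProduct.tmul_add, TensorProduct.smul_tmul,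
        TensorProduct.tmul_smul, TensorProduct.assoc_tmul, TensorProduct.assoc_symm_tmul,
        TensorProduct.map_tmul, LinearMap.id_apply, LinearEquiv.coe_coe, LinearMap.comp_apply]
        try (match_scalars <;> (field_simp; try ring))
      · -- i = k < j
        simp only [hβ, hij, hij.ne, hij.ne', hij.not_gt, if_true, if_false, ite_true, ite_false,
        eq_self_iff_true, map_add, map_smul, smul_add, smul_smul,
        TensorProduct.add_tmul, TensorProduct.tmul_add, TensorProduct.smul_tmul,
        TensorProduct.tmul_smul, TensorProduct.assoc_tmul, TensorProduct.assoc_symm_tmul,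
        TensorProduct.map_tmul, LinearMap.id_apply, LinearEquiv.coe_coe, LinearMap.comp_apply]
        try (match_scalars <;> (field_simp; try ring))
      · -- k < i < j
        simp only [hβ, hij, hik, hjk, hij.ne, hij.ne', hik.ne, hik.ne', hjk.ne, hjk.ne', hij.not_gt, hik.not_gt, hjk.not_gt, if_true, if_false, ite_true, ite_false,
        eq_self_iff_true, map_add, map_smul, smul_add, smul_smul,
        TensorProduct.add_tmul, TensorProduct.tmul_add, TensorProduct.smul_tmul,
        TensorProduct.tmul_smul, TensorProduct.assoc_tmul, TensorProduct.assoc_symm_tmul,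
        TensorProduct.map_tmul, LinearMap.id_apply, LinearEquiv.coe_coe, LinearMap.comp_apply]
        try (match_scalars <;> (field_simp; try ring))
  · rcases lt_trichotomy i k with hik | rfl | hik
    · -- i = j < k
      simp only [hβ, hik, hik.ne, hik.ne', hik.not_gt, if_true, if_false, ite_true, ite_false,
      eq_self_iff_true, map_add, map_smul, smul_add, smul_smul,
      TensorProduct.add_tmul, TensorProduct.tmul_add, TensorProduct.smul_tmul,
      TensorProduct.tmul_smul, TensorProduct.assoc_tmul, TensorProduct.assoc_symm_tmul,
      TensorProduct.map_tmul, LinearMap.id_apply, LinearEquiv.coe_coe, LinearMap.comp_apply]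
      try (match_scalars <;> (field_simp; try ring))
    · -- i = j = k
      simp only [hβ, lt_irrefl i, if_true, if_false, ite_true, ite_false,
      eq_self_iff_true, map_add, map_smul, smul_add, smul_smul,
      TensorProduct.add_tmul, TensorProduct.tmul_add, TensorProduct.smul_tmul,
      TensorProduct.tmul_smul, TensorProduct.assoc_tmul, TensorProduct.assoc_symm_tmul,
      TensorProduct.map_tmul, LinearMap.id_apply, LinearEquiv.coe_coe, LinearMap.comp_apply]
      try (match_scalars <;> (field_simp; try ring))
    · -- k < i = j
      simp only [hβ, hik, hik.ne, hik.ne', hik.not_gt, if_true, if_false, ite_true, ite_false,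
      eq_self_iff_true, map_add, map_smul, smul_add, smul_smul,
      TensorProduct.add_tmul, TensorProduct.tmul_add, TensorProduct.smul_tmul,
      TensorProduct.tmul_smul, TensorProduct.assoc_tmul, TensorProduct.assoc_symm_tmul,
      TensorProduct.map_tmul, LinearMap.id_apply, LinearEquiv.coe_coe, LinearMap.comp_apply]
      try (match_scalars <;> (field_simp; try ring))
  · rcases lt_trichotomy j k with hjk | rfl | hjk
    · rcases lt_trichotomy i k with hik | rfl | hik
      · -- j < i < k
        simp only [hβ, hij, hik, hjk, hij.ne, hij.ne', hik.ne, hik.ne', hjk.ne, hjk.ne', hij.not_gt, hik.not_gt, hjk.not_gt, if_true, if_false, ite_true, ite_false,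
        eq_self_iff_true, map_add, map_smul, smul_add, smul_smul,
        TensorProduct.add_tmul, TensorProduct.tmul_add, TensorProduct.smul_tmul,
        TensorProduct.tmul_smul, TensorProduct.assoc_tmul, TensorProduct.assoc_symm_tmul,
        TensorProduct.map_tmul, LinearMap.id_apply, LinearEquiv.coe_coe, LinearMap.comp_apply]
        try (match_scalars <;> (field_simp; try ring))
      · -- j < i = k
        simp only [hβ, hij, hij.ne, hij.ne', hij.not_gt, if_true, if_false, ite_true, ite_false,
        eq_self_iff_true, map_add, map_smul, smul_add, smul_smul,
        TensorProduct.add_tmul, TensorProduct.tmul_add, TensorProduct.smul_tmul,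
        TensorProduct.tmul_smul, TensorProduct.assoc_tmul, TensorProduct.assoc_symm_tmul,
        TensorProduct.map_tmul, LinearMap.id_apply, LinearEquiv.coe_coe, LinearMap.comp_apply]
        try (match_scalars <;> (field_simp; try ring))
      · -- j < k < i
        simp only [hβ, hij, hik, hjk, hij.ne, hij.ne', hik.ne, hik.ne', hjk.ne, hjk.ne', hij.not_gt, hik.not_gt, hjk.not_gt, if_true, if_false, ite_true, ite_false,
        eq_self_iff_true, map_add, map_smul, smul_add, smul_smul,
        TensorProduct.add_tmul, TensorProduct.tmul_add, TensorProduct.smul_tmul,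
        TensorProduct.tmul_smul, TensorProduct.assoc_tmul, TensorProduct.assoc_symm_tmul,
        TensorProduct.map_tmul, LinearMap.id_apply, LinearEquiv.coe_coe, LinearMap.comp_apply]
        try (match_scalars <;> (field_simp; try ring))
    · -- k = j < i
      simp only [hβ, hij, hij.ne, hij.ne', hij.not_gt, if_true, if_false, ite_true, ite_false,
      eq_self_iff_true, map_add, map_smul, smul_add, smul_smul,
      TensorProduct.add_tmul, TensorProduct.tmul_add, TensorProduct.smul_tmul,
      TensorProduct.tmul_smul, TensorProduct.assoc_tmul, TensorProduct.assoc_symm_tmul,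
      TensorProduct.map_tmul, LinearMap.id_apply, LinearEquiv.coe_coe, LinearMap.comp_apply]
      try (match_scalars <;> (field_simp; try ring))
    · -- k < j < i
      simp only [hβ, hij, hjk, hjk.trans hij, hij.ne, hjk.ne, (hjk.trans hij).ne, hij.ne', hjk.ne', (hjk.trans hij).ne', hij.not_gt, hjk.not_gt, (hjk.trans hij).not_gt, if_true, if_false, ite_true, ite_false,
      eq_self_iff_true, map_add, map_smul, smul_add, smul_smul,
      TensorProduct.add_tmul, TensorProduct.tmul_add, TensorProduct.smul_tmul,
      TensorProduct.tmul_smul, TensorProduct.assoc_tmul, TensorProduct.assoc_symm_tmul,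
      TensorProduct.map_tmul, LinearMap.id_apply, LinearEquiv.coe_coe, LinearMap.comp_apply]
      try (match_scalars <;> (field_simp; try ring))
end

section
/- The Levi crossing βℓ is invertible with inverse βℓ', i.e. βℓ ∘ βℓ' = id_{V ⊗ V} = βℓ' ∘ βℓ. (This is the Reidemeister II relation for the Levi crossings.) -/
open scoped TensorProduct

/-- The Levi crossing `βℓ` (given by the gl_n R-matrix within blocks of the Levi subalgebra
and the swap map across distinct blocks) is invertible with inverse `βℓ'`
(Reidemeister II for the Levi crossings). -/
theorem stmt8 {K : Type*} [Field K] (q : K) (hq : q ≠ 0) (n : ℕ) (hn : 1 ≤ n)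
    (d : ℕ) (hd : 1 ≤ d) (c : Fin n → Fin d)
    (βℓ βℓ' : ((Fin n → K) ⊗[K] (Fin n → K)) →ₗ[K] ((Fin n → K) ⊗[K] (Fin n → K)))
    (hβℓ : ∀ i j : Fin n,
      βℓ (stdB K i ⊗ₜ[K] stdB K j) =
        if c i = c j then
          (if i = j then q • (stdB K i ⊗ₜ[K] stdB K i)
           else if i < j then stdB K j ⊗ₜ[K] stdB K i
           else stdB K j ⊗ₜ[K] stdB K i + (q - q⁻¹) • (stdB K i ⊗ₜ[K] stdB K j))
        else stdB K j ⊗ₜ[K] stdB K i)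
    (hβℓ' : ∀ i j : Fin n,
      βℓ' (stdB K i ⊗ₜ[K] stdB K j) =
        if c i = c j then
          (if i = j then q⁻¹ • (stdB K i ⊗ₜ[K] stdB K i)
           else if j < i then stdB K j ⊗ₜ[K] stdB K i
           else stdB K j ⊗ₜ[K] stdB K i + (q⁻¹ - q) • (stdB K i ⊗ₜ[K] stdB K j))
        else stdB K j ⊗ₜ[K] stdB K i) :
    βℓ ∘ₗ βℓ' = LinearMap.id ∧ βℓ' ∘ₗ βℓ = LinearMap.id := by

  have hb : ∀ i : Fin n, (Pi.basisFun K (Fin n)) i = stdB K i := by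
    intro i
    ext x
    simp [stdB, Pi.single_apply, eq_comm]
  constructor
  · apply Module.Basis.ext ((Pi.basisFun K (Fin n)).tensorProduct (Pi.basisFun K (Fin n)))
    rintro ⟨i, j⟩
    rw [Module.Basis.tensorProduct_apply, hb, hb, LinearMap.comp_apply, LinearMap.id_apply, hβℓ']
    by_cases hcc : c i = c j
    · rw [if_pos hcc]
      rcases lt_trichotomy i j with h | h | h
      · rw [if_neg h.ne, if_neg (not_lt.2 h.le), map_add, map_smul, hβℓ, hβℓ,
            if_pos hcc.symm, if_pos hcc, if_neg h.ne', if_neg (not_lt.2 h.le),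
            if_neg h.ne, if_pos h]
        module
      · subst h
        rw [if_pos rfl, map_smul, hβℓ, if_pos hcc, if_pos rfl, smul_smul,
          inv_mul_cancel₀ hq, one_smul]
      · rw [if_neg h.ne', if_pos h, hβℓ, if_pos hcc.symm, if_neg h.ne, if_pos h]
    · rw [if_neg hcc, hβℓ, if_neg (fun hh => hcc hh.symm)]
  · apply Module.Basis.ext ((Pi.basisFun K (Fin n)).tensorProduct (Pi.basisFun K (Fin n)))
    rintro ⟨i, j⟩
    rw [Module.Basis.tensorProduct_apply, hb, hb, LinearMap.comp_apply, LinearMap.id_apply, hβℓ]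
    by_cases hcc : c i = c j
    · rw [if_pos hcc]
      rcases lt_trichotomy i j with h | h | h
      · rw [if_neg h.ne, if_pos h, hβℓ', if_pos hcc.symm, if_neg h.ne', if_pos h]
      · subst h
        rw [if_pos rfl, map_smul, hβℓ', if_pos hcc, if_pos rfl, smul_smul,
          mul_inv_cancel₀ hq, one_smul]
      · rw [if_neg h.ne', if_neg (not_lt.2 h.le), map_add, map_smul, hβℓ', hβℓ',
            if_pos hcc.symm, if_pos hcc, if_neg h.ne, if_neg (not_lt.2 h.le),
            if_neg h.ne', if_pos h]
        module
    · rw [if_neg hcc, hβℓ', if_neg (fun hh => hcc hh.symm)]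
end

section
/- The Levi crossing βℓ satisfies the Yang–Baxter (braid) relation on V ⊗ V ⊗ V: (βℓ ⊗ id_V) ∘ (id_V ⊗ βℓ) ∘ (βℓ ⊗ id_V) = (id_V ⊗ βℓ) ∘ (βℓ ⊗ id_V) ∘ (id_V ⊗ βℓ). (This is the Reidemeister III relation for the Levi crossings.) -/
open scoped TensorProduct

private theorem myIfPos {α : Sort*} {c : Prop} [Decidable c] (h : c) (a b : α) :
    (if c then a else b) = a := if_pos h

private theorem myIfNeg {α : Sort*} {c : Prop} [Decidable c] (h : ¬c) (a b : α) :
    (if c then a else b) = b := if_neg h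

set_option maxHeartbeats 4000000 in
set_option synthInstance.maxHeartbeats 1000000 in
/-- The Levi crossing `βℓ` satisfies the Yang–Baxter (braid) relation on `V ⊗ V ⊗ V`
(Reidemeister III for the Levi crossings). -/
theorem stmt9 {K : Type*} [Field K] (q : K) (hq : q ≠ 0) (n : ℕ) (hn : 1 ≤ n)
    (d : ℕ) (hd : 1 ≤ d) (c : Fin n → Fin d)
    (βℓ : ((Fin n → K) ⊗[K] (Fin n → K)) →ₗ[K] ((Fin n → K) ⊗[K] (Fin n → K)))
    (hβℓ : ∀ i j : Fin n,
      βℓ (stdB K i ⊗ₜ[K] stdB K j) =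
        if c i = c j then
          (if i = j then q • (stdB K i ⊗ₜ[K] stdB K i)
           else if i < j then stdB K j ⊗ₜ[K] stdB K i
           else stdB K j ⊗ₜ[K] stdB K i + (q - q⁻¹) • (stdB K i ⊗ₜ[K] stdB K j))
        else stdB K j ⊗ₜ[K] stdB K i)
    (b₁ b₂ : ((Fin n → K) ⊗[K] ((Fin n → K) ⊗[K] (Fin n → K))) →ₗ[K]
      ((Fin n → K) ⊗[K] ((Fin n → K) ⊗[K] (Fin n → K))))
    -- `b₁ = βℓ ⊗ id_V`, transported along the associator
    (hb₁ : b₁ = (TensorProduct.assoc K (Fin n → K) (Fin n → K) (Fin n → K)).toLinearMap ∘ₗ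
      TensorProduct.map βℓ (LinearMap.id : (Fin n → K) →ₗ[K] (Fin n → K)) ∘ₗ
      (TensorProduct.assoc K (Fin n → K) (Fin n → K) (Fin n → K)).symm.toLinearMap)
    -- `b₂ = id_V ⊗ βℓ`
    (hb₂ : b₂ = TensorProduct.map (LinearMap.id : (Fin n → K) →ₗ[K] (Fin n → K)) βℓ) :
    b₁ ∘ₗ b₂ ∘ₗ b₁ = b₂ ∘ₗ b₁ ∘ₗ b₂ := by
  subst hb₁ hb₂
  refine Module.Basis.ext ((Pi.basisFun K (Fin n)).tensorProduct
    ((Pi.basisFun K (Fin n)).tensorProduct (Pi.basisFun K (Fin n)))) ?_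
  rintro ⟨i, j, k⟩
  have hB : ∀ i : Fin n, Pi.basisFun K (Fin n) i = stdB K i := fun i => by
    simp [stdB, Pi.basisFun_apply]
  simp only [Module.Basis.tensorProduct_apply, hB]
  rcases lt_trichotomy i j with hij | hij | hij <;>
    rcases lt_trichotomy j k with hjk | hjk | hjk <;>
      rcases lt_trichotomy i k with hik | hik | hik <;>
        rcases eq_or_ne (c i) (c j) with h1 | h1 <;>
          rcases eq_or_ne (c j) (c k) with h2 | h2 <;>
            rcases eq_or_ne (c i) (c k) with h3 | h3 <;>
  first
  | (exfalso; omega)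
  | exact absurd (h1.trans h2) h3
  | exact absurd (h1.symm.trans h3) h2
  | exact absurd (h3.trans h2.symm) h1
  | exact absurd (congrArg c hij) h1
  | exact absurd (congrArg c hjk) h2
  | exact absurd (congrArg c hik) h3
  | ((try rw [hij]) <;> (try rw [hjk]) <;> (try rw [hik]) <;>
     simp (disch := first
        | rfl
        | assumption
        | exact Ne.symm (by assumption)
        | exact Eq.symm (by assumption)
        | exact congrArg c (by assumption)
        | exact Ne.symm (fun h => absurd (congrArg c h) (by assumption))
        | omega) only
      [LinearMap.coe_comp, Function.comp_apply, LinearEquiv.coe_coe,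
       TensorProduct.assoc_tmul, TensorProduct.assoc_symm_tmul, TensorProduct.map_tmul,
       LinearMap.id_coe, id_eq, hβℓ, myIfPos, myIfNeg, if_true, if_false, map_add, map_smul,
       TensorProduct.add_tmul, TensorProduct.tmul_add, TensorProduct.tmul_smul,
       ← TensorProduct.smul_tmul'] <;>
     match_scalars <;> field_simp <;> ring)
end

section
/- The positive curl on the vector representation equals multiplication by q^n: the composite V ≅ V ⊗ K → V ⊗ (V ⊗ V*) → V ⊗ (V ⊗ V*) → V ⊗ K ≅ V given by (id_V ⊗ ev_r) ∘ (β ⊗ id_{V*}) ∘ (id_V ⊗ coev_l) equals q^n · id_V. (This is the Reidemeister I relation for label k = 1, whose scalar is v^{k(−k+n+1)} = q^n, realized by the explicit maps on the vector representation.) -/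
open scoped TensorProduct

/-- The dual basis vector `f i` (the `i`-th coordinate projection). -/
noncomputable def dualB (K : Type*) [Field K] {n : ℕ} (i : Fin n) :
    Module.Dual K (Fin n → K) :=
  LinearMap.proj i

theorem keysum (K : Type*) [Field K] (q : K) (hq : q ≠ 0) (n : ℕ) : ∀ i : ℕ,
    (q - q⁻¹) * ∑ k ∈ Finset.range i, q ^ ((n:ℤ)-1-2*k) + q ^ ((n:ℤ)-2*i) = q ^ (n:ℤ) := by
  intro i
  induction i with
  | zero => simp
  | succ m ih =>
    rw [Finset.sum_range_succ, mul_add]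
    have h1 : q * q ^ ((n:ℤ)-1-2*m) = q ^ ((n:ℤ)-2*m) := by
      rw [show ((n:ℤ)-2*m) = ((n:ℤ)-1-2*m)+1 by ring, zpow_add_one₀ hq, mul_comm]
    have h2 : q⁻¹ * q ^ ((n:ℤ)-1-2*m) = q ^ ((n:ℤ)-2*((m:ℤ)+1)) := by
      rw [show ((n:ℤ)-2*((m:ℤ)+1)) = ((n:ℤ)-1-2*m)-1 by ring, zpow_sub_one₀ hq, mul_comm]
    have h3 : (q-q⁻¹) * q ^ ((n:ℤ)-1-2*m) + q ^ ((n:ℤ)-2*((m:ℕ)+1:ℕ)) = q ^ ((n:ℤ)-2*m) := by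
      push_cast
      rw [sub_mul, h2, h1]; ring
    push_cast at h3 ⊢
    linear_combination ih + h3


set_option maxHeartbeats 1000000 in
set_option synthInstance.maxHeartbeats 400000 in
/-- The positive curl on the vector representation equals multiplication by `q^n`:
`(id_V ⊗ ev_r) ∘ (β ⊗ id_{V*}) ∘ (id_V ⊗ coev_l) = q^n · id_V` (Reidemeister I for `k = 1`).
Here, with `1 ≤ i ≤ n` replaced by `i : Fin n`, the paper's exponent `n+1-2i` in `ev_r`
becomes `n-1-2i`. -/
theorem stmt15 {K : Type*} [Field K] (q : K) (hq : q ≠ 0) (n : ℕ) (hn : 1 ≤ n)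
    (β : ((Fin n → K) ⊗[K] (Fin n → K)) →ₗ[K] ((Fin n → K) ⊗[K] (Fin n → K)))
    (hβ : ∀ i j : Fin n,
      β (stdB K i ⊗ₜ[K] stdB K j) =
        if i = j then q • (stdB K i ⊗ₜ[K] stdB K i)
        else if i < j then stdB K j ⊗ₜ[K] stdB K i
        else stdB K j ⊗ₜ[K] stdB K i + (q - q⁻¹) • (stdB K i ⊗ₜ[K] stdB K j))
    (evr : ((Fin n → K) ⊗[K] (Module.Dual K (Fin n → K))) →ₗ[K] K)
    (coevl : K →ₗ[K] ((Fin n → K) ⊗[K] (Module.Dual K (Fin n → K))))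
    (hevr : ∀ i j : Fin n, evr (stdB K i ⊗ₜ[K] dualB K j) =
      if i = j then q ^ ((n : ℤ) - 1 - 2 * (i : ℤ)) else 0)
    (hcoevl : coevl 1 = ∑ i : Fin n, stdB K i ⊗ₜ[K] dualB K i) :
    (TensorProduct.rid K (Fin n → K)).toLinearMap ∘ₗ
      TensorProduct.map (LinearMap.id : (Fin n → K) →ₗ[K] (Fin n → K)) evr ∘ₗ
      (TensorProduct.assoc K (Fin n → K) (Fin n → K)
        (Module.Dual K (Fin n → K))).toLinearMap ∘ₗ
      TensorProduct.map β
        (LinearMap.id : Module.Dual K (Fin n → K) →ₗ[K] Module.Dual K (Fin n → K)) ∘ₗ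
      (TensorProduct.assoc K (Fin n → K) (Fin n → K)
        (Module.Dual K (Fin n → K))).symm.toLinearMap ∘ₗ
      TensorProduct.map (LinearMap.id : (Fin n → K) →ₗ[K] (Fin n → K)) coevl ∘ₗ
      (TensorProduct.rid K (Fin n → K)).symm.toLinearMap
    = q ^ n • LinearMap.id := by
  apply Module.Basis.ext (Pi.basisFun K (Fin n))
  intro i
  have hb : (Pi.basisFun K (Fin n)) i = stdB K i := by
    simp [stdB, Pi.basisFun_apply]
  rw [hb]
  simp only [LinearMap.comp_apply, LinearEquiv.coe_coe, TensorProduct.rid_symm_apply,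
    TensorProduct.map_tmul, LinearMap.id_apply, hcoevl, TensorProduct.tmul_sum, map_sum,
    TensorProduct.assoc_symm_tmul, LinearMap.smul_apply]
  have hterm : ∀ k : Fin n,
      (TensorProduct.rid K (Fin n → K))
        (TensorProduct.map LinearMap.id evr
          ((TensorProduct.assoc K (Fin n → K) (Fin n → K) (Module.Dual K (Fin n → K)))
            (β (stdB K i ⊗ₜ[K] stdB K k) ⊗ₜ[K] dualB K k)))
      = (if k = i then q ^ ((n:ℤ)-2*(i:ℤ))
         else if k < i then (q-q⁻¹) * q ^ ((n:ℤ)-1-2*(k:ℤ)) else 0) • stdB K i := by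
    intro k
    rw [hβ i k]
    rcases lt_trichotomy i k with h | h | h
    · rw [if_neg (ne_of_lt h), if_pos h, if_neg (ne_of_gt h), if_neg (not_lt_of_gt h)]
      simp [TensorProduct.assoc_tmul, hevr, if_neg (ne_of_lt h), TensorProduct.rid_tmul,
        Fin.ne_of_lt, (ne_of_lt h).symm]
    · subst h
      rw [if_pos rfl, if_pos rfl, ← TensorProduct.smul_tmul']
      simp only [map_smul, LinearMap.id_apply, TensorProduct.assoc_tmul,
        TensorProduct.map_tmul, hevr, if_pos rfl, TensorProduct.rid_tmul, smul_smul]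
      simp only [if_true]
      rw [show ((n:ℤ)-2*(i:ℤ)) = ((n:ℤ)-1-2*(i:ℤ))+1 by ring, zpow_add_one₀ hq, mul_comm]
    · rw [if_neg (ne_of_gt h), if_neg (not_lt_of_gt h), if_neg (ne_of_lt h), if_pos h,
        TensorProduct.add_tmul, ← TensorProduct.smul_tmul']
      simp only [map_add, map_smul, LinearMap.id_apply, TensorProduct.assoc_tmul,
        TensorProduct.map_tmul, hevr, if_neg (ne_of_lt h), if_neg (ne_of_gt h), if_pos rfl,
        TensorProduct.tmul_zero, map_zero, zero_add, TensorProduct.rid_tmul, smul_smul,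
        smul_eq_mul, if_true]
  rw [Finset.sum_congr rfl (fun k _ => hterm k), ← Finset.sum_smul]
  congr 1
  have split : ∀ k : Fin n,
      (if k = i then q ^ ((n:ℤ)-2*(i:ℤ))
        else if k < i then (q-q⁻¹) * q ^ ((n:ℤ)-1-2*(k:ℤ)) else 0)
      = (if k = i then q ^ ((n:ℤ)-2*(i:ℤ)) else 0)
        + (if k < i then (q-q⁻¹) * q ^ ((n:ℤ)-1-2*(k:ℤ)) else 0) := by
    intro k
    rcases eq_or_ne k i with rfl | hk
    · simp [lt_irrefl]
    · simp [hk]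
  rw [Finset.sum_congr rfl (fun k _ => split k), Finset.sum_add_distrib,
    Finset.sum_ite_eq' Finset.univ i]
  simp only [Finset.mem_univ, if_pos]
  have h2 : (∑ k : Fin n, if k < i then (q-q⁻¹) * q ^ ((n:ℤ)-1-2*(k:ℤ)) else 0)
      = (q-q⁻¹) * ∑ j ∈ Finset.range (i:ℕ), q ^ ((n:ℤ)-1-2*(j:ℤ)) := by
    rw [Finset.mul_sum]
    have e : ∀ k : Fin n, (if k < i then (q-q⁻¹) * q ^ ((n:ℤ)-1-2*(k:ℤ)) else 0)
        = (fun j : ℕ => if j < (i:ℕ) then (q-q⁻¹) * q ^ ((n:ℤ)-1-2*(j:ℤ)) else 0) (k:ℕ) := by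
      intro k
      by_cases hk : k < i
      · rw [if_pos hk]; exact (if_pos (show (k:ℕ) < (i:ℕ) from hk)).symm
      · rw [if_neg hk]; exact (if_neg (show ¬ (k:ℕ) < (i:ℕ) from hk)).symm
    rw [Finset.sum_congr rfl (fun k _ => e k),
      Fin.sum_univ_eq_sum_range (fun j => if j < (i:ℕ) then (q-q⁻¹) * q ^ ((n:ℤ)-1-2*(j:ℤ)) else 0) n]
    · rw [← Finset.sum_subset (Finset.range_subset_range.mpr i.isLt.le)]
      · exact Finset.sum_congr rfl fun j hj => if_pos (Finset.mem_range.mp hj)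
      · intro j _ hj
        exact if_neg (fun hlt => hj (Finset.mem_range.mpr hlt))
  rw [h2, add_comm, keysum K q hq n (i:ℕ), zpow_natCast]
end
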